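/- Assume D is integrable with respect to π_{k-1}. Then the Kullback–Leibler divergence between the pushforward of π_{k-1} by T and π_k satisfies KL(T_#π_{k-1} ‖ π_k) = ∫ D dπ_{k-1} + log(Z_k / Z_{k-1}). -/

import Mathlib

open MeasureTheory Classical

/-- Kullback–Leibler divergence `∫ log (dμ/dν) dμ`, taken to be `+∞` when `μ` is not
absolutely continuous with respect to `ν` or the log density is not integrable. -/

noncomputable def KL {α : Type*} [MeasurableSpace α] (μ ν : Measure α) : EReal :=
  if μ ≪ ν ∧ Integrable (fun x => Real.log ((μ.rnDeriv ν x).toReal)) μ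
  then ((∫ x, Real.log ((μ.rnDeriv ν x).toReal) ∂μ : ℝ) : EReal)
  else ⊤

/-!
By the change of variables formula, `T_#π_{k-1}` has Lebesgue density
`|det DT⁻¹| · (γ_{k-1} ∘ T⁻¹) / Z_{k-1}`, so it has density
`ρ = |det DT⁻¹| · (γ_{k-1} ∘ T⁻¹ / Z_{k-1}) / (γ_k / Z_k)` with respect to `π_k`, and
`KL(T_#π_{k-1} ‖ π_k) = ∫ log ρ d(T_#π_{k-1}) = ∫ log (ρ ∘ T) dπ_{k-1}`. Since
`det DT⁻¹(T x) = (det DT x)⁻¹` by the chain rule, `log (ρ (T x)) = D x + log (Z_k / Z_{k-1})`.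
-/

open scoped ENNReal

section Normalization

variable {α : Type*} [MeasurableSpace α] {μ : Measure α}

lemma integral_pos_of_forall_pos [NeZero μ] {f : α → ℝ} (hf : ∀ x, 0 < f x)
    (hf_int : Integrable f μ) : 0 < ∫ x, f x ∂μ := by
  have hsupp : Function.support f = Set.univ := Set.eq_univ_of_forall fun x => (hf x).ne'
  rw [integral_pos_iff_support_of_nonneg (fun x => (hf x).le) hf_int, hsupp]
  exact Measure.measure_univ_pos.mpr (NeZero.ne μ)

lemma isProbabilityMeasure_withDensity_div_integral {γ : α → ℝ} (hγ : ∀ x, 0 ≤ γ x)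
    (hγ_int : Integrable γ μ) (hZ : ∫ x, γ x ∂μ ≠ 0) :
    IsProbabilityMeasure (μ.withDensity fun x => ENNReal.ofReal (γ x / ∫ x, γ x ∂μ)) := by
  have hZ_nonneg : 0 ≤ ∫ x, γ x ∂μ := integral_nonneg hγ
  constructor
  rw [withDensity_apply _ MeasurableSet.univ, Measure.restrict_univ,
    ← ofReal_integral_eq_lintegral_ofReal (hγ_int.div_const _)
      (Filter.Eventually.of_forall fun x => div_nonneg (hγ x) hZ_nonneg),
    integral_div, div_self hZ, ENNReal.ofReal_one]

end Normalization

section ChangeOfVariables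

variable {E : Type*} [NormedAddCommGroup E] [NormedSpace ℝ E]

lemma det_fderiv_mul_det_fderiv_of_leftInverse {T Tinv : E → E} {x : E}
    (hTinv : DifferentiableAt ℝ Tinv (T x)) (hT : DifferentiableAt ℝ T x)
    (hleft : Function.LeftInverse Tinv T) :
    (fderiv ℝ Tinv (T x)).det * (fderiv ℝ T x).det = 1 := by
  have hcomp : (fderiv ℝ Tinv (T x)).comp (fderiv ℝ T x) = ContinuousLinearMap.id ℝ E := by
    rw [← fderiv_comp x hTinv hT, hleft.comp_eq_id, fderiv_id]
  simpa [ContinuousLinearMap.det, LinearMap.det_comp] using congrArg ContinuousLinearMap.det hcomp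

noncomputable def pushforwardDensityRatio (Tinv : E → E) (f g : E → ℝ) (y : E) : ℝ :=
  |(fderiv ℝ Tinv y).det| * f (Tinv y) / g y

variable {T Tinv : E → E} {f g : E → ℝ}

lemma pushforwardDensityRatio_nonneg (hf : ∀ x, 0 ≤ f x) (hg : ∀ y, 0 ≤ g y) (y : E) :
    0 ≤ pushforwardDensityRatio Tinv f g y :=
  div_nonneg (mul_nonneg (abs_nonneg _) (hf _)) (hg y)

lemma pushforwardDensityRatio_apply_self (hT : Differentiable ℝ T) (hTinv : Differentiable ℝ Tinv)
    (hleft : Function.LeftInverse Tinv T) (x : E) :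
    pushforwardDensityRatio Tinv f g (T x) = f x / (g (T x) * |(fderiv ℝ T x).det|) := by
  rw [pushforwardDensityRatio, hleft x, eq_inv_of_mul_eq_one_left
    (det_fderiv_mul_det_fderiv_of_leftInverse (hTinv _) (hT x) hleft), abs_inv]
  ring

lemma log_pushforwardDensityRatio_div_apply_self (hT : Differentiable ℝ T)
    (hTinv : Differentiable ℝ Tinv) (hleft : Function.LeftInverse Tinv T) {γ₀ γ₁ : E → ℝ}
    {Z₀ Z₁ : ℝ} {x : E} (hγ₀ : 0 < γ₀ x) (hγ₁ : 0 < γ₁ (T x)) (hZ₀ : 0 < Z₀) (hZ₁ : 0 < Z₁) :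
    Real.log (pushforwardDensityRatio Tinv (fun x => γ₀ x / Z₀) (fun y => γ₁ y / Z₁) (T x)) =
      Real.log (γ₀ x / γ₁ (T x)) - Real.log |(fderiv ℝ T x).det| + Real.log (Z₁ / Z₀) := by
  have hJ : 0 < |(fderiv ℝ T x).det| := abs_pos.mpr (right_ne_zero_of_mul_eq_one
    (det_fderiv_mul_det_fderiv_of_leftInverse (hTinv _) (hT x) hleft))
  have hγ : 0 < γ₀ x / γ₁ (T x) := div_pos hγ₀ hγ₁
  have hsplit : γ₀ x / Z₀ / (γ₁ (T x) / Z₁ * |(fderiv ℝ T x).det|)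
      = γ₀ x / γ₁ (T x) / |(fderiv ℝ T x).det| * (Z₁ / Z₀) := by
    field_simp [hγ₁.ne', hZ₁.ne']
  rw [pushforwardDensityRatio_apply_self hT hTinv hleft, hsplit,
    Real.log_mul (div_pos hγ hJ).ne' (div_pos hZ₁ hZ₀).ne', Real.log_div hγ.ne' hJ.ne']

variable [FiniteDimensional ℝ E] [MeasurableSpace E] [BorelSpace E]
  (μ : Measure E) [μ.IsAddHaarMeasure]

lemma measurable_pushforwardDensityRatio (hTinv : Measurable Tinv) (hf : Measurable f)
    (hg : Measurable g) : Measurable (pushforwardDensityRatio Tinv f g) :=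
  (((continuous_abs.comp ContinuousLinearMap.continuous_det).measurable.comp
    (measurable_fderiv ℝ Tinv)).mul (hf.comp hTinv)).div hg

lemma map_withDensity_eq_withDensity_abs_det_fderiv_inv (hT : Measurable T)
    (hTinv : Differentiable ℝ Tinv) (hleft : Function.LeftInverse Tinv T)
    (hright : Function.RightInverse Tinv T) (f : E → ℝ≥0∞) :
    (μ.withDensity f).map T =
      μ.withDensity fun y => ENNReal.ofReal |(fderiv ℝ Tinv y).det| * f (Tinv y) := by
  ext s hs
  rw [Measure.map_apply hT hs, withDensity_apply _ (hT hs), withDensity_apply _ hs,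
    ← Set.image_eq_preimage_of_inverse hright hleft]
  exact lintegral_image_eq_lintegral_abs_det_fderiv_mul μ hs
    (fun y _ => (hTinv y).hasFDerivAt.hasFDerivWithinAt) hright.injective.injOn f

lemma map_withDensity_ofReal_eq_withDensity_pushforwardDensityRatio (hT : Measurable T)
    (hTinv : Differentiable ℝ Tinv) (hleft : Function.LeftInverse Tinv T)
    (hright : Function.RightInverse Tinv T) (hf : Measurable f) (hg : Measurable g)
    (hg_pos : ∀ y, 0 < g y) :
    (μ.withDensity fun x => ENNReal.ofReal (f x)).map T =
      (μ.withDensity fun y => ENNReal.ofReal (g y)).withDensity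
        fun y => ENNReal.ofReal (pushforwardDensityRatio Tinv f g y) := by
  rw [map_withDensity_eq_withDensity_abs_det_fderiv_inv μ hT hTinv hleft hright,
    ← withDensity_mul _ hg.ennreal_ofReal
      (measurable_pushforwardDensityRatio hTinv.continuous.measurable hf hg).ennreal_ofReal]
  congr with y
  rw [Pi.mul_apply, ← ENNReal.ofReal_mul (abs_nonneg _), ← ENNReal.ofReal_mul (hg_pos y).le,
    pushforwardDensityRatio, mul_div_cancel₀ _ (hg_pos y).ne']

end ChangeOfVariables

section KullbackLeibler

variable {α β : Type*} [MeasurableSpace α] [MeasurableSpace β]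

lemma KL_eq_integral_log_of_eq_withDensity {μ ν : Measure α} [SigmaFinite ν] {ρ : α → ℝ}
    (hρ : Measurable ρ) (hρ_nonneg : ∀ x, 0 ≤ ρ x)
    (hμ : μ = ν.withDensity fun x => ENNReal.ofReal (ρ x))
    (hint : Integrable (fun x => Real.log (ρ x)) μ) :
    KL μ ν = ((∫ x, Real.log (ρ x) ∂μ : ℝ) : EReal) := by
  have hac : μ ≪ ν := hμ ▸ withDensity_absolutelyContinuous _ _
  have hlog : (fun x => Real.log ((μ.rnDeriv ν x).toReal)) =ᵐ[μ] fun x => Real.log (ρ x) := by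
    have hrn := Measure.rnDeriv_withDensity ν hρ.ennreal_ofReal
    rw [← hμ] at hrn
    filter_upwards [hac.ae_le hrn] with x hx
    rw [hx, ENNReal.toReal_ofReal (hρ_nonneg x)]
  rw [KL, if_pos ⟨hac, hint.congr hlog.symm⟩, integral_congr_ae hlog]

lemma KL_map_eq_integral_log_comp {μ : Measure α} {ν : Measure β} [SigmaFinite ν]
    {T : α → β} (hT : Measurable T) {ρ : β → ℝ} (hρ : Measurable ρ) (hρ_nonneg : ∀ y, 0 ≤ ρ y)
    (hmap : μ.map T = ν.withDensity fun y => ENNReal.ofReal (ρ y))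
    (hint : Integrable (fun x => Real.log (ρ (T x))) μ) :
    KL (μ.map T) ν = ((∫ x, Real.log (ρ (T x)) ∂μ : ℝ) : EReal) := by
  have hlogρ : AEStronglyMeasurable (fun y => Real.log (ρ y)) (μ.map T) :=
    (Real.measurable_log.comp hρ).aestronglyMeasurable
  rw [KL_eq_integral_log_of_eq_withDensity hρ hρ_nonneg hmap
      ((integrable_map_measure hlogρ hT.aemeasurable).mpr hint),
    integral_map hT.aemeasurable hlogρ]

end KullbackLeibler

/-- `KL(T_#π_{k-1} ‖ π_k) = ∫ D dπ_{k-1} + log (Z_k / Z_{k-1})`. -/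
theorem craft_kl_decomposition
    (M : ℕ)
    (γkm γk : (Fin M → ℝ) → ℝ)
    (hγkm_pos : ∀ x, 0 < γkm x) (hγk_pos : ∀ x, 0 < γk x)
    (hγkm_meas : Measurable γkm) (hγk_meas : Measurable γk)
    (hγkm_int : Integrable γkm) (hγk_int : Integrable γk)
    (Zkm Zk : ℝ)
    (hZkm : Zkm = ∫ x, γkm x) (hZk : Zk = ∫ x, γk x)
    (πkm πk : Measure (Fin M → ℝ))
    (hπkm : πkm = volume.withDensity (fun x => ENNReal.ofReal (γkm x / Zkm)))
    (hπk : πk = volume.withDensity (fun x => ENNReal.ofReal (γk x / Zk)))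
    (T Tinv : (Fin M → ℝ) → (Fin M → ℝ))
    (hT : ContDiff ℝ 1 T) (hTinv : ContDiff ℝ 1 Tinv)
    (hTleft : Function.LeftInverse Tinv T)
    (hTright : Function.RightInverse Tinv T)
    (D : (Fin M → ℝ) → ℝ)
    (hD : ∀ x, D x = Real.log (γkm x / γk (T x)) - Real.log |(fderiv ℝ T x).det|)
    (hD_int : Integrable D πkm) :
    KL (πkm.map T) πk = ((∫ x, D x ∂πkm + Real.log (Zk / Zkm) : ℝ) : EReal) := by
  have hZkm_pos : 0 < Zkm := hZkm ▸ integral_pos_of_forall_pos hγkm_pos hγkm_int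
  have hZk_pos : 0 < Zk := hZk ▸ integral_pos_of_forall_pos hγk_pos hγk_int
  have : IsProbabilityMeasure πkm := hπkm ▸ hZkm ▸
    isProbabilityMeasure_withDensity_div_integral (fun x => (hγkm_pos x).le) hγkm_int
      (hZkm ▸ hZkm_pos.ne')
  have : SigmaFinite πk := hπk ▸ inferInstance
  have hT_diff : Differentiable ℝ T := hT.differentiable one_ne_zero
  have hTinv_diff : Differentiable ℝ Tinv := hTinv.differentiable one_ne_zero
  set ρ := pushforwardDensityRatio Tinv (fun x => γkm x / Zkm) (fun y => γk y / Zk) with hρ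
  have hmap : πkm.map T = πk.withDensity fun y => ENNReal.ofReal (ρ y) := by
    rw [hπkm, hπk]
    exact map_withDensity_ofReal_eq_withDensity_pushforwardDensityRatio volume
      hT_diff.continuous.measurable hTinv_diff hTleft hTright (hγkm_meas.div_const Zkm)
      (hγk_meas.div_const Zk) fun y => div_pos (hγk_pos y) hZk_pos
  have hlogρ x : Real.log (ρ (T x)) = D x + Real.log (Zk / Zkm) := by
    rw [hρ, log_pushforwardDensityRatio_div_apply_self hT_diff hTinv_diff hTleft (hγkm_pos x)
      (hγk_pos (T x)) hZkm_pos hZk_pos, hD]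
  have hlogρ_int : Integrable (fun x => Real.log (ρ (T x))) πkm := by
    simp only [hlogρ]
    exact hD_int.add (integrable_const _)
  rw [KL_map_eq_integral_log_comp hT_diff.continuous.measurable
    (measurable_pushforwardDensityRatio hTinv_diff.continuous.measurable
      (hγkm_meas.div_const Zkm) (hγk_meas.div_const Zk))
    (pushforwardDensityRatio_nonneg (fun x => (div_pos (hγkm_pos x) hZkm_pos).le)
      (fun y => (div_pos (hγk_pos y) hZk_pos).le)) hmap hlogρ_int,
    integral_congr_ae (.of_forall hlogρ), integral_add hD_int (integrable_const _),
    integral_const, probReal_univ, one_smul]
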